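/- Let J and F be ideals of S = K[x_1,...,x_n] with a fixed monomial order such that (J,F) is a Gröbner-nice pair (in(J+F) = in(J)+in(F)). If E is an ideal with F ⊆ E and J + E = J + F, then (J,E) is also a Gröbner-nice pair. -/
import Mathlib


open MvPolynomial

variable {K : Type*} [Field K] {n : ℕ}

/-- The leading monomial (exponent vector) of a polynomial with respect to a monomial
order `m`: the maximum of the support; by convention `lm m 0 = 0`. -/
noncomputable def lm (m : MonomialOrder (Fin n)) (f : MvPolynomial (Fin n) K) :
    Fin n →₀ ℕ :=
  m.toSyn.symm (f.support.sup fun d => m.toSyn d)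

/-- The initial ideal of `I`: the ideal generated by the leading monomials of the
nonzero elements of `I`. -/
noncomputable def initialIdeal (m : MonomialOrder (Fin n))
    (I : Ideal (MvPolynomial (Fin n) K)) : Ideal (MvPolynomial (Fin n) K) :=
  Ideal.span {p | ∃ f ∈ I, f ≠ 0 ∧ p = monomial (lm m f) (1 : K)}

/-- `G` is a Gröbner basis of `I`: a finite set of nonzero polynomials generating `I`
whose leading monomials generate the initial ideal of `I`. -/
def IsGroebnerBasis (m : MonomialOrder (Fin n)) (I : Ideal (MvPolynomial (Fin n) K))
    (G : Set (MvPolynomial (Fin n) K)) : Prop :=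
  G.Finite ∧ (0 : MvPolynomial (Fin n) K) ∉ G ∧ Ideal.span G = I ∧
    Ideal.span ((fun g => monomial (lm m g) (1 : K)) '' G) = initialIdeal m I

/-- The S-polynomial `S(f,g)` with respect to the monomial order `m`. -/
noncomputable def sPoly (m : MonomialOrder (Fin n)) (f g : MvPolynomial (Fin n) K) :
    MvPolynomial (Fin n) K :=
  monomial (lm m f ⊔ lm m g - lm m f) (f.coeff (lm m f))⁻¹ * f -
    monomial (lm m f ⊔ lm m g - lm m g) (g.coeff (lm m g))⁻¹ * g

/-- An ideal is a monomial ideal if it is generated by monomials. -/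
def IsMonomialIdeal (I : Ideal (MvPolynomial (Fin n) K)) : Prop :=
  ∃ M : Set (Fin n →₀ ℕ), I = Ideal.span ((fun μ => (monomial μ (1 : K))) '' M)

lemma initialIdeal_mono (m : MonomialOrder (Fin n))
    {I I' : Ideal (MvPolynomial (Fin n) K)} (h : I ≤ I') :
    initialIdeal m I ≤ initialIdeal m I' := by
  apply Ideal.span_mono
  rintro p ⟨f, hf, hf0, rfl⟩
  exact ⟨f, h hf, hf0, rfl⟩

/-- If `(J,F)` is a Gröbner-nice pair, `F ⊆ E` and `J + E = J + F`, then `(J,E)` is a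
Gröbner-nice pair. -/
theorem stmt14 (m : MonomialOrder (Fin n)) (J F E : Ideal (MvPolynomial (Fin n) K))
    (hGF : initialIdeal m (J + F) = initialIdeal m J + initialIdeal m F)
    (hFE : F ≤ E) (hsum : J + E = J + F) :
    initialIdeal m (J + E) = initialIdeal m J + initialIdeal m E := by
  apply le_antisymm
  · rw [hsum, hGF]
    exact sup_le le_sup_left ((initialIdeal_mono m hFE).trans le_sup_right)
  · refine sup_le (initialIdeal_mono m le_sup_left) ?_
    have hE : E ≤ J + E := le_sup_right
    exact initialIdeal_mono m hE
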